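/- Let σ be a well-formed trace and let e1, e2 ∈ E_σ be conflicting events with e1 strictly before e2 in σ. Then (e1, e2) is a sync-preserving race in σ if and only if SPIdealσ(e1, e2) contains neither e1 nor e2. -/

import Mathlib

/-!
Events, traces, and predictive data races.

An event datum is a pair of a thread identifier and an operation
(read/write of a memory location, or acquire/release of a lock).
Following the convention that events of a trace are identified with
positions (hence pairwise distinct), a trace is modeled as a
duplicate-free list of event *identifiers* (natural numbers), listed
in trace order, together with a global data assignment
`ev : ℕ → EventData` giving the thread and operation of each event.
-/

inductive Op : Type
  | read : ℕ → Op
  | write : ℕ → Op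
  | acq : ℕ → Op
  | rel : ℕ → Op
  deriving DecidableEq

structure EventData : Type where
  thread : ℕ
  op : Op
  deriving DecidableEq

abbrev Trace : Type := List ℕ

namespace Race

variable (ev : ℕ → EventData)

/-- Trace order: `e1` occurs no later than `e2` in `σ`. -/
def trord (σ : Trace) (e1 e2 : ℕ) : Prop :=
  e1 ∈ σ ∧ e2 ∈ σ ∧ σ.idxOf e1 ≤ σ.idxOf e2

/-- Thread order: trace order plus equality of threads. -/
def threadOrd (σ : Trace) (e1 e2 : ℕ) : Prop :=
  trord σ e1 e2 ∧ (ev e1).thread = (ev e2).thread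

/-- Lock-semantics check: `h` records, for each lock, the thread currently
holding it.  A lock may be acquired only when free, and released only by
the thread holding it. -/
def lockOk : (ℕ → Option ℕ) → Trace → Prop
  | _, [] => True
  | h, e :: rest =>
    match (ev e).op with
    | Op.acq l => h l = none ∧ lockOk (Function.update h l (some (ev e).thread)) rest
    | Op.rel l => h l = some (ev e).thread ∧ lockOk (Function.update h l none) rest
    | _ => lockOk h rest

/-- A well-formed trace: pairwise distinct events respecting lock semantics. -/
def WellFormed (σ : Trace) : Prop := σ.Nodup ∧ lockOk ev (fun _ => none) σ

/-- A well-formed subtrace: a contiguous subtrace of some well-formed trace. -/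
def WellFormedSub (σ : Trace) : Prop :=
  ∃ pre suf : Trace, WellFormed ev (pre ++ σ ++ suf)

/-- Happens-before: the smallest partial order on the events of `σ` containing
thread order and ordering each release before every later acquire of the
same lock. -/
inductive HB (σ : Trace) : ℕ → ℕ → Prop
  | thread_order {e1 e2 : ℕ} : threadOrd ev σ e1 e2 → HB σ e1 e2
  | rel_acq {e1 e2 l : ℕ} :
      trord σ e1 e2 → (ev e1).op = Op.rel l → (ev e2).op = Op.acq l → HB σ e1 e2
  | trans {e1 e2 e3 : ℕ} : HB σ e1 e2 → HB σ e2 e3 → HB σ e1 e3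

def isWrite (o : Op) : Prop := ∃ x, o = Op.write x

/-- The memory location accessed by an operation, if any. -/
def loc : Op → Option ℕ
  | Op.read x => some x
  | Op.write x => some x
  | _ => none

/-- Conflicting events: same location, different threads, at least one write. -/
def Conflicting (e1 e2 : ℕ) : Prop :=
  (ev e1).thread ≠ (ev e2).thread ∧
  (∃ x, loc (ev e1).op = some x ∧ loc (ev e2).op = some x) ∧
  (isWrite (ev e1).op ∨ isWrite (ev e2).op)

/-- An HB race: a conflicting pair of events of `σ`, unordered by happens-before. -/
def HBRace (σ : Trace) (e1 e2 : ℕ) : Prop :=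
  e1 ∈ σ ∧ e2 ∈ σ ∧ Conflicting ev e1 e2 ∧ ¬ HB ev σ e1 e2 ∧ ¬ HB ev σ e2 e1

/-- `lw σ e`: the last write (to the location read by `e`) before `e` in `σ`. -/
def lw (σ : Trace) (e : ℕ) : Option ℕ :=
  match (ev e).op with
  | Op.read x =>
      ((σ.take (σ.idxOf e)).filter fun f => decide ((ev f).op = Op.write x)).getLast?
  | _ => none

/-- The matching release of an acquire: the first release of the same lock after it. -/
def matchRel (σ : Trace) (a : ℕ) : Option ℕ :=
  match (ev a).op with
  | Op.acq l =>
      ((σ.drop (σ.idxOf a + 1)).filter fun f => decide ((ev f).op = Op.rel l)).head?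
  | _ => none

/-- The matching acquire of a release: the last acquire of the same lock before it. -/
def matchAcq (σ : Trace) (r : ℕ) : Option ℕ :=
  match (ev r).op with
  | Op.rel l =>
      ((σ.take (σ.idxOf r)).filter fun f => decide ((ev f).op = Op.acq l)).getLast?
  | _ => none

/-- The last event of the same thread before `e` in `σ`. -/
def prevE (σ : Trace) (e : ℕ) : Option ℕ :=
  ((σ.take (σ.idxOf e)).filter fun f => decide ((ev f).thread = (ev e).thread)).getLast?

/-- `ρ` is a correct reordering of `σ`. -/
structure CorrectReordering (σ ρ : Trace) : Prop where
  wf : WellFormed ev ρ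
  subset : ∀ e ∈ ρ, e ∈ σ
  to_closed : ∀ e1 e2 : ℕ, threadOrd ev σ e1 e2 → e2 ∈ ρ → e1 ∈ ρ ∧ threadOrd ev ρ e1 e2
  lw_eq : ∀ e ∈ ρ, (∃ x, (ev e).op = Op.read x) → lw ev ρ e = lw ev σ e

/-- `e` is enabled in the correct reordering `ρ` of `σ`. -/
def Enabled (σ ρ : Trace) (e : ℕ) : Prop :=
  e ∈ σ ∧ e ∉ ρ ∧ ∀ f : ℕ, threadOrd ev σ f e → f ≠ e → f ∈ ρ

/-- A reordering is sync-preserving if acquires of a common lock keep their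
relative order from `σ`. -/
def SyncPres (σ ρ : Trace) : Prop :=
  ∀ a1 a2 l : ℕ, a1 ∈ ρ → a2 ∈ ρ → (ev a1).op = Op.acq l → (ev a2).op = Op.acq l →
    (trord ρ a1 a2 ↔ trord σ a1 a2)

/-- A sync-preserving race. -/
def SyncPresRace (σ : Trace) (e1 e2 : ℕ) : Prop :=
  e1 ∈ σ ∧ e2 ∈ σ ∧ Conflicting ev e1 e2 ∧
  ∃ ρ : Trace, CorrectReordering ev σ ρ ∧ SyncPres ev σ ρ ∧
    Enabled ev σ ρ e1 ∧ Enabled ev σ ρ e2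

/-- A predictive race. -/
def PredictiveRace (σ : Trace) (e1 e2 : ℕ) : Prop :=
  e1 ∈ σ ∧ e2 ∈ σ ∧ Conflicting ev e1 e2 ∧
  ∃ ρ : Trace, CorrectReordering ev σ ρ ∧ Enabled ev σ ρ e1 ∧ Enabled ev σ ρ e2

/-- A subset of the events of `σ`, downward closed under thread order and
closed under last-writes. -/
def TLClosed (σ : Trace) (S : Set ℕ) : Prop :=
  (∀ e ∈ S, e ∈ σ) ∧
  (∀ e1 e2 : ℕ, threadOrd ev σ e1 e2 → e2 ∈ S → e1 ∈ S) ∧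
  (∀ e ∈ S, ∀ f : ℕ, lw ev σ e = some f → f ∈ S)

/-- The smallest TL-closed set containing `S`. -/
def TLClosure (σ : Trace) (S : Set ℕ) : Set ℕ :=
  ⋂₀ {C : Set ℕ | TLClosed ev σ C ∧ S ⊆ C}

/-- Sync-preserving closed sets. -/
def SPClosed (σ : Trace) (S : Set ℕ) : Prop :=
  TLClosed ev σ S ∧
  ∀ a1 a2 l : ℕ, a1 ∈ S → a2 ∈ S → (ev a1).op = Op.acq l → (ev a2).op = Op.acq l →
    trord σ a1 a2 → a1 ≠ a2 → ∀ r : ℕ, matchRel ev σ a1 = some r → r ∈ S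

/-- The smallest sync-preserving closed set containing `S`. -/
def SPClosure (σ : Trace) (S : Set ℕ) : Set ℕ :=
  ⋂₀ {C : Set ℕ | SPClosed ev σ C ∧ S ⊆ C}

/-- `SPIdeal σ e1 e2 = SPClosure σ ({prev σ e1, prev σ e2} \ {⊥})`. -/
def SPIdeal (σ : Trace) (e1 e2 : ℕ) : Set ℕ :=
  SPClosure ev σ {f : ℕ | prevE ev σ e1 = some f ∨ prevE ev σ e2 = some f}

/-- Local time: the number of events strictly below `e` in thread order. -/
def ltime (σ : Trace) (e : ℕ) : ℕ :=
  ((σ.take (σ.idxOf e)).filter fun f => decide ((ev f).thread = (ev e).thread)).length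

/-- Causal timestamp: for each thread `t`, the maximum local time of an
event of thread `t` happening before `e` (and `-1` if there is none). -/
noncomputable def ctime (σ : Trace) (e : ℕ) (t : ℕ) : ℤ :=
  sSup (insert (-1)
    {n : ℤ | ∃ f ∈ σ, (ev f).thread = t ∧ HB ev σ f e ∧ n = (ltime ev σ f : ℤ)})

end Race

/-!
A sync-preserving correct reordering `ρ` of `σ`, read as a set of events, is sync-preserving
closed: when `ρ` contains two acquires of a lock, lock semantics forces `ρ` to release the first
one before the second, and thread order then drags the matching release in `σ` into `ρ`.
Enabledness of `e1` and `e2` puts their thread predecessors into `ρ`, hence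
`SPIdeal σ e1 e2 ⊆ ρ` misses `e1` and `e2`. Conversely, the events of the ideal, listed in the
order of `σ`, form a sync-preserving correct reordering: TL-closure preserves thread order and
last writes, and SP-closure leaves at most the last critical section of each lock open, which
keeps lock semantics; `e1` and `e2` are enabled because their predecessors generate the ideal.
-/

theorem forall_ite_eq_iff {β : Type*} [DecidableEq β] {A B : β → Prop} {x : β} :
    (∀ y, if x = y then A y else B y) ↔ A x ∧ ∀ y, y ≠ x → B y := by
  refine ⟨fun h => ⟨by simpa using h x, fun y hy => by simpa [Ne.symm hy] using h y⟩, ?_⟩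
  rintro ⟨hA, hB⟩ y
  split_ifs with hxy
  · exact hxy ▸ hA
  · exact hB y (Ne.symm hxy)

namespace List

variable {α : Type*} {L ρ σ X Y : List α} {a b : α}

theorem head?_filter_filter {p q : α → Bool}
    (h : ∀ w, (L.filter p).head? = some w → q w) :
    ((L.filter q).filter p).head? = (L.filter p).head? := by
  induction L with
  | nil => rfl
  | cons x L ih =>
    by_cases hpx : p x
    · have hqx : q x := h x (by simp [hpx])
      simp [hpx, hqx]
    · rw [filter_cons_of_neg hpx] at h ⊢
      by_cases hqx : q x
      · rw [filter_cons_of_pos hqx, filter_cons_of_neg hpx, ih h]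
      · rw [filter_cons_of_neg hqx, ih h]

theorem getLast?_filter_filter {p q : α → Bool}
    (h : ∀ w, (L.filter p).getLast? = some w → q w) :
    ((L.filter q).filter p).getLast? = (L.filter p).getLast? := by
  simp only [getLast?_eq_head?_reverse, ← filter_reverse] at h ⊢
  exact head?_filter_filter h

variable [DecidableEq α]

theorem Nodup.mem_drop_iff_le_idxOf (hn : L.Nodup) {n : ℕ} :
    a ∈ L.drop n ↔ a ∈ L ∧ n ≤ L.idxOf a := by
  have hdisj := (take_append_drop n L ▸ hn).disjoint
  constructor
  · intro ha
    have haL : a ∈ L := mem_of_mem_drop ha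
    refine ⟨haL, not_lt.1 fun hlt => hdisj ((mem_take_iff_idxOf_lt haL).2 hlt) ha⟩
  · rintro ⟨haL, hle⟩
    rw [← take_append_drop n L, mem_append] at haL
    exact haL.resolve_left fun h =>
      not_lt.2 hle ((mem_take_iff_idxOf_lt (mem_of_mem_take h)).1 h)

theorem eq_take_idxOf_append_cons_drop (ha : a ∈ L) :
    L = L.take (L.idxOf a) ++ a :: L.drop (L.idxOf a + 1) := by
  have hlt : L.idxOf a < L.length := idxOf_lt_length_of_mem ha
  conv_lhs => rw [← take_append_drop (L.idxOf a) L, drop_eq_getElem_cons hlt, getElem_idxOf hlt]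

theorem Nodup.idxOf_eq_of_getElem?_eq (hn : L.Nodup) {i : ℕ} (h : L[i]? = some a) :
    L.idxOf a = i := by
  obtain ⟨hi, rfl⟩ := getElem?_eq_some_iff.1 h
  exact hn.idxOf_getElem i hi

theorem Sublist.idxOf_le_idxOf_iff (hs : ρ <+ σ) (hn : σ.Nodup) (ha : a ∈ ρ) (hb : b ∈ ρ) :
    ρ.idxOf a ≤ ρ.idxOf b ↔ σ.idxOf a ≤ σ.idxOf b := by
  obtain ⟨f, hf⟩ := sublist_iff_exists_orderEmbedding_getElem?_eq.1 hs
  have hidx : ∀ x ∈ ρ, σ.idxOf x = f (ρ.idxOf x) := fun x hx =>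
    hn.idxOf_eq_of_getElem?_eq ((hf _).symm.trans (getElem?_idxOf hx))
  rw [hidx a ha, hidx b hb, f.le_iff_le]

theorem Sublist.idxOf_lt_idxOf_iff (hs : ρ <+ σ) (hn : σ.Nodup) (ha : a ∈ ρ) (hb : b ∈ ρ) :
    ρ.idxOf a < ρ.idxOf b ↔ σ.idxOf a < σ.idxOf b := by
  simpa only [not_le] using (hs.idxOf_le_idxOf_iff hn hb ha).not

theorem idxOf_eq_length_of_eq_append_cons (h : L = X ++ a :: Y) (ha : a ∉ X) :
    L.idxOf a = X.length := by
  simp [h, idxOf_append_of_notMem ha]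

theorem Nodup.drop_idxOf_of_eq_append_cons (hn : L.Nodup) (h : L = X ++ a :: Y) :
    L.drop (L.idxOf a + 1) = Y := by
  have ha : a ∉ X := fun haX => (h ▸ hn).disjoint haX mem_cons_self
  rw [idxOf_eq_length_of_eq_append_cons h ha, h]
  simp

theorem filter_eq_take_append_cons_drop {p : α → Bool} (ha : a ∈ L) (hp : p a) :
    L.filter p = (L.take (L.idxOf a)).filter p ++ a :: (L.drop (L.idxOf a + 1)).filter p := by
  conv_lhs => rw [eq_take_idxOf_append_cons_drop ha]
  rw [filter_append, filter_cons_of_pos hp]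

theorem take_idxOf_filter {p : α → Bool} (ha : a ∈ L) (hp : p a) :
    (L.filter p).take ((L.filter p).idxOf a) = (L.take (L.idxOf a)).filter p := by
  have hnot : a ∉ (L.take (L.idxOf a)).filter p := fun h =>
    lt_irrefl _ ((mem_take_iff_idxOf_lt ha).1 (mem_of_mem_filter h))
  rw [idxOf_eq_length_of_eq_append_cons (filter_eq_take_append_cons_drop ha hp) hnot]
  conv_lhs => rw [filter_eq_take_append_cons_drop ha hp]
  exact take_left' rfl

theorem drop_idxOf_filter {p : α → Bool} (ha : a ∈ L) (hp : p a) :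
    (L.filter p).drop ((L.filter p).idxOf a + 1) = (L.drop (L.idxOf a + 1)).filter p := by
  have hnot : a ∉ (L.take (L.idxOf a)).filter p := fun h =>
    lt_irrefl _ ((mem_take_iff_idxOf_lt ha).1 (mem_of_mem_filter h))
  rw [idxOf_eq_length_of_eq_append_cons (filter_eq_take_append_cons_drop ha hp) hnot]
  conv_lhs => rw [filter_eq_take_append_cons_drop ha hp]
  simp

end List

namespace Race

open List

def onLock (ev : ℕ → EventData) (l e : ℕ) : Bool :=
  match (ev e).op with
  | Op.acq l' => l' = l
  | Op.rel l' => l' = l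
  | _ => false

def lockOkL (ev : ℕ → EventData) (l : ℕ) : Option ℕ → Trace → Prop
  | _, [] => True
  | s, e :: rest =>
    match (ev e).op with
    | Op.acq l' =>
        if l' = l then s = none ∧ lockOkL ev l (some (ev e).thread) rest else lockOkL ev l s rest
    | Op.rel l' =>
        if l' = l then s = some (ev e).thread ∧ lockOkL ev l none rest else lockOkL ev l s rest
    | _ => lockOkL ev l s rest

inductive LockSeq (ev : ℕ → EventData) (l : ℕ) : List ℕ → Prop
  | nil : LockSeq ev l []
  | acq (a : ℕ) : (ev a).op = Op.acq l → LockSeq ev l [a]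
  | acq_rel (a r : ℕ) (rest : List ℕ) : (ev a).op = Op.acq l → (ev r).op = Op.rel l →
      (ev r).thread = (ev a).thread → LockSeq ev l rest → LockSeq ev l (a :: r :: rest)

variable {ev : ℕ → EventData} {σ ρ τ L X Y : Trace} {S C I : Set ℕ} {a b e f p r l : ℕ}

theorem lw_eq_some (h : lw ev σ e = some f) : (∃ x, (ev e).op = Op.read x) ∧ f ∈ σ := by
  unfold lw at h
  split at h
  · exact ⟨⟨_, ‹_›⟩, mem_of_mem_take (mem_of_mem_filter (mem_of_getLast? h))⟩
  · cases h

theorem matchRel_eq_some (h : matchRel ev σ a = some r) :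
    ∃ l, (ev a).op = Op.acq l ∧ (ev r).op = Op.rel l ∧ r ∈ σ.drop (σ.idxOf a + 1) := by
  unfold matchRel at h
  split at h
  · obtain ⟨hr, hrel⟩ := mem_filter.1 (mem_of_mem_head? h)
    exact ⟨_, ‹_›, of_decide_eq_true hrel, hr⟩
  · cases h

theorem prevE_eq_some (he : e ∈ σ) (h : prevE ev σ e = some p) :
    threadOrd ev σ p e ∧ σ.idxOf p < σ.idxOf e := by
  obtain ⟨hp, hth⟩ := mem_filter.1 (mem_of_getLast? h)
  have hpσ : p ∈ σ := mem_of_mem_take hp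
  have hlt := (mem_take_iff_idxOf_lt hpσ).1 hp
  exact ⟨⟨⟨hpσ, he, hlt.le⟩, of_decide_eq_true hth⟩, hlt⟩

theorem exists_prevE_of_threadOrd (hn : σ.Nodup) (h : threadOrd ev σ f e) (hne : f ≠ e) :
    ∃ p, prevE ev σ e = some p ∧ threadOrd ev σ f p := by
  obtain ⟨⟨hf, he, hle⟩, hth⟩ := h
  set T := (σ.take (σ.idxOf e)).filter fun g => decide ((ev g).thread = (ev e).thread)
  have hlt : σ.idxOf f < σ.idxOf e := hle.lt_of_ne (mt (idxOf_inj hf).1 hne)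
  have hfT : f ∈ T := mem_filter.2 ⟨(mem_take_iff_idxOf_lt hf).2 hlt, decide_eq_true hth⟩
  have hT : T ≠ [] := ne_nil_of_mem hfT
  have hTσ : T <+ σ := (filter_sublist).trans (take_sublist _ _)
  have hTn : T.Nodup := hTσ.nodup hn
  have hpT : T.getLast hT ∈ T := getLast_mem hT
  refine ⟨T.getLast hT, getLast?_eq_some_getLast hT, ⟨⟨hf, hTσ.subset hpT, ?_⟩, ?_⟩⟩
  · refine (hTσ.idxOf_le_idxOf_iff hn hfT hpT).1 ?_
    have hlast : T.getLast hT ∉ T.dropLast := fun h =>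
      (dropLast_append_getLast hT ▸ hTn).disjoint h (mem_singleton_self _)
    rw [idxOf_getLast hT hlast]
    exact Nat.le_pred_of_lt (idxOf_lt_length_of_mem hfT)
  · exact hth.trans (of_decide_eq_true (mem_filter.1 hpT).2).symm

theorem Enabled.prevE_mem (h : Enabled ev σ ρ e) (hp : prevE ev σ e = some p) : p ∈ ρ :=
  have ⟨hto, hlt⟩ := prevE_eq_some h.1 hp
  h.2.2 p hto (by rintro rfl; exact lt_irrefl _ hlt)

theorem SPClosed_setOf_mem : SPClosed ev σ {e | e ∈ σ} :=
  ⟨⟨fun _ he => he, fun _ _ h _ => h.1.1, fun _ _ _ hf => (lw_eq_some hf).2⟩,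
    fun _ _ _ _ _ _ _ _ _ _ hr =>
      have ⟨_, _, _, hr⟩ := matchRel_eq_some hr
      mem_of_mem_drop hr⟩

theorem subset_SPClosure : S ⊆ SPClosure ev σ S := fun _ hs _ hC => hC.2 hs

theorem SPClosure_subset (hC : SPClosed ev σ C) (hS : S ⊆ C) : SPClosure ev σ S ⊆ C :=
  fun _ hx => hx C ⟨hC, hS⟩

theorem SPClosed_SPClosure (hS : ∀ s ∈ S, s ∈ σ) : SPClosed ev σ (SPClosure ev σ S) := by
  refine ⟨⟨fun e he => he _ ⟨SPClosed_setOf_mem, hS⟩, ?_, ?_⟩, ?_⟩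
  · exact fun f g h hg C hC => hC.1.1.2.1 f g h (hg C hC)
  · exact fun e he f hf C hC => hC.1.1.2.2 e (he C hC) f hf
  · exact fun a1 a2 l h1 h2 ho1 ho2 hord hne r hr C hC =>
      hC.1.2 a1 a2 l (h1 C hC) (h2 C hC) ho1 ho2 hord hne r hr

theorem onLock_iff : onLock ev l e ↔ (ev e).op = Op.acq l ∨ (ev e).op = Op.rel l := by
  unfold onLock
  split <;> simp_all

theorem lockOk_iff_forall_lockOkL : ∀ {h : ℕ → Option ℕ},
    lockOk ev h τ ↔ ∀ l, lockOkL ev l (h l) τ := by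
  induction τ with
  | nil => simp [lockOk, lockOkL]
  | cons e rest ih =>
    intro h
    unfold lockOk lockOkL
    split <;> first
      | exact ih
      | rw [ih, Function.forall_update_iff _ fun l s => lockOkL ev l s rest, forall_ite_eq_iff,
          and_assoc]

theorem lockOkL_filter_onLock : ∀ {s : Option ℕ},
    lockOkL ev l s (τ.filter (onLock ev l)) ↔ lockOkL ev l s τ := by
  induction τ with
  | nil => exact Iff.rfl
  | cons e rest ih =>
    intro s
    by_cases he : onLock ev l e
    · rw [filter_cons_of_pos he]
      unfold lockOkL
      split <;> simp only [ih]
    · rw [filter_cons_of_neg he, ih]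
      rw [lockOkL.eq_2]
      unfold onLock at he
      split <;> simp_all

theorem LockSeq.of_lockOkL : ∀ {L : List ℕ},
    (∀ e ∈ L, onLock ev l e) → lockOkL ev l none L → LockSeq ev l L
  | [], _, _ => LockSeq.nil
  | [a], hL, h => by
    rcases onLock_iff.1 (hL a mem_cons_self) with ha | ha
    · exact LockSeq.acq a ha
    · simp [lockOkL, ha] at h
  | a :: b :: rest, hL, h => by
    rcases onLock_iff.1 (hL a mem_cons_self) with ha | ha
    · rcases onLock_iff.1 (hL b (by simp)) with hb | hb
      · simp [lockOkL, ha, hb] at h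
      · simp only [lockOkL, ha, hb, if_pos, true_and, Option.some.injEq] at h
        exact LockSeq.acq_rel a b rest ha hb h.1.symm
          (of_lockOkL (fun e he => hL e (by simp [he])) h.2)
    · simp [lockOkL, ha] at h

theorem LockSeq.lockOkL (h : LockSeq ev l L) : lockOkL ev l none L := by
  induction h with
  | nil => trivial
  | acq a ha => simp [Race.lockOkL, ha]
  | acq_rel a r rest ha hr hth _ ih => simp [Race.lockOkL, ha, hr, hth, ih]

theorem LockSeq.op_of_mem (h : LockSeq ev l L) (he : e ∈ L) :
    (ev e).op = Op.acq l ∨ (ev e).op = Op.rel l := by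
  induction h with
  | nil => cases he
  | acq a ha => exact Or.inl (mem_singleton.1 he ▸ ha)
  | acq_rel a r rest ha hr hth _ ih =>
    rcases mem_cons.1 he with rfl | he
    · exact Or.inl ha
    rcases mem_cons.1 he with rfl | he
    · exact Or.inr hr
    · exact ih he

theorem LockSeq.exists_rel_of_acq (h : LockSeq ev l L) (hL : L = X ++ a :: Y)
    (ha : (ev a).op = Op.acq l) (hY : Y ≠ []) :
    ∃ r Y', Y = r :: Y' ∧ (ev r).op = Op.rel l ∧ (ev r).thread = (ev a).thread := by
  induction h generalizing X with
  | nil => simp at hL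
  | acq a₀ _ =>
    rcases X with _ | ⟨x, X⟩
    · exact absurd (cons.inj hL).2.symm hY
    · simp at hL
  | acq_rel a₀ r₀ rest ha₀ hr₀ hth₀ _ ih =>
    rcases X with _ | ⟨x, _ | ⟨x', X⟩⟩
    · obtain ⟨rfl, rfl⟩ := cons.inj hL
      exact ⟨r₀, rest, rfl, hr₀, hth₀⟩
    · obtain ⟨-, rfl, -⟩ : a₀ = x ∧ r₀ = a ∧ rest = Y := by simpa using hL
      simp [ha] at hr₀
    · exact ih (cons.inj (cons.inj hL).2).2

theorem LockSeq.exists_acq_of_rel (h : LockSeq ev l L) (hr : r ∈ L)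
    (hrel : (ev r).op = Op.rel l) :
    ∃ X Y a, L = X ++ a :: r :: Y ∧ (ev a).op = Op.acq l := by
  induction h with
  | nil => cases hr
  | acq a₀ ha₀ => simp [mem_singleton.1 hr ▸ ha₀] at hrel
  | acq_rel a₀ r₀ rest ha₀ _ _ _ ih =>
    rcases mem_cons.1 hr with rfl | hr
    · simp [ha₀] at hrel
    rcases mem_cons.1 hr with rfl | hr
    · exact ⟨[], rest, a₀, rfl, ha₀⟩
    · obtain ⟨X, Y, a, rfl, ha⟩ := ih hr
      exact ⟨a₀ :: r₀ :: X, Y, a, rfl, ha⟩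

theorem LockSeq.filter (h : LockSeq ev l L) (q : ℕ → Bool)
    (hrel : ∀ X Y a r, L = X ++ a :: r :: Y → (ev a).op = Op.acq l → (ev r).op = Op.rel l →
      q r → q a)
    (hacq : ∀ X Y a r a', L = X ++ a :: r :: Y → (ev a).op = Op.acq l →
      (ev r).op = Op.rel l → a' ∈ Y → (ev a').op = Op.acq l → q a → q a' → q r) :
    LockSeq ev l (L.filter q) := by
  induction h with
  | nil => exact LockSeq.nil
  | acq a ha =>
    by_cases hqa : q a
    · simpa [hqa] using LockSeq.acq a ha
    · simpa [hqa] using LockSeq.nil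
  | acq_rel a r rest ha hr hth hrest ih =>
    have ih' := ih (fun X Y b s hs => hrel (a :: r :: X) Y b s (by rw [hs]; rfl))
      (fun X Y b s b' hs => hacq (a :: r :: X) Y b s b' (by rw [hs]; rfl))
    by_cases hqa : q a
    · by_cases hqr : q r
      · rw [filter_cons_of_pos hqa, filter_cons_of_pos hqr]
        exact LockSeq.acq_rel a r _ ha hr hth ih'
      · -- once `r` is dropped, no later acquire, and hence no later release, can be kept
        have hnone : ∀ a' ∈ rest, (ev a').op = Op.acq l → q a' = false := fun a' ha' hacq' =>
          Bool.eq_false_iff.2 fun hqa' => hqr (hacq [] rest a r a' rfl ha hr ha' hacq' hqa hqa')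
        have hrest : rest.filter q = [] := by
          refine filter_eq_nil_iff.2 fun x hx hqx => ?_
          rcases hrest.op_of_mem hx with hx' | hx'
          · simp [hnone x hx hx'] at hqx
          · obtain ⟨X, Y, a', hs, ha'⟩ := hrest.exists_acq_of_rel hx hx'
            have hqa' := hrel (a :: r :: X) Y a' x (by rw [hs]; rfl) ha' hx' hqx
            simp [hnone a' (by simp [hs]) ha'] at hqa'
        rw [filter_cons_of_pos hqa, filter_cons_of_neg hqr, hrest]
        exact LockSeq.acq a ha
    · have hqr : ¬ q r := fun hqr => hqa (hrel [] rest a r rfl ha hr hqr)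
      rw [filter_cons_of_neg hqa, filter_cons_of_neg hqr]
      exact ih'

theorem WellFormed.lockSeq (hwf : WellFormed ev σ) (l : ℕ) :
    LockSeq ev l (σ.filter (onLock ev l)) :=
  .of_lockOkL (fun _ he => (mem_filter.1 he).2)
    (lockOkL_filter_onLock.2 (lockOk_iff_forall_lockOkL.1 hwf.2 l))

theorem lockOk_of_forall_lockSeq (h : ∀ l, LockSeq ev l (τ.filter (onLock ev l))) :
    lockOk ev (fun _ => none) τ :=
  lockOk_iff_forall_lockOkL.2 fun l => lockOkL_filter_onLock.1 (h l).lockOkL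

theorem matchRel_eq_of_drop_proj (ha : a ∈ σ) (hacq : (ev a).op = Op.acq l)
    (hrel : (ev r).op = Op.rel l)
    (hdrop : (σ.filter (onLock ev l)).drop ((σ.filter (onLock ev l)).idxOf a + 1) = r :: Y) :
    matchRel ev σ a = some r := by
  have hrel_onLock : ∀ x, (ev x).op = Op.rel l → onLock ev l x :=
    fun _ hx => onLock_iff.2 (.inr hx)
  unfold matchRel
  rw [hacq]
  dsimp only
  rw [← filter_congr (p := fun f => decide ((ev f).op = Op.rel l) && onLock ev l f)
      fun x _ => by by_cases hx : (ev x).op = Op.rel l <;> simp [hx, hrel_onLock],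
    ← filter_filter, ← drop_idxOf_filter ha (onLock_iff.2 (.inl hacq)), hdrop,
    filter_cons_of_pos (by simpa using hrel)]
  rfl

theorem WellFormed.exists_matchRel (hwf : WellFormed ev σ) (hacq : (ev a).op = Op.acq l)
    (hb : b ∈ σ) (hbl : onLock ev l b) (hab : σ.idxOf a < σ.idxOf b) :
    ∃ r, matchRel ev σ a = some r ∧ (ev r).op = Op.rel l ∧ (ev r).thread = (ev a).thread ∧
      σ.idxOf a < σ.idxOf r ∧ σ.idxOf r ≤ σ.idxOf b := by
  set τ := σ.filter (onLock ev l)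
  have ha : a ∈ σ := idxOf_lt_length_iff.1 (hab.trans (idxOf_lt_length_of_mem hb))
  have hτσ : τ <+ σ := filter_sublist
  have hτn : τ.Nodup := hτσ.nodup hwf.1
  have haτ : a ∈ τ := mem_filter.2 ⟨ha, onLock_iff.2 (.inl hacq)⟩
  have hbτ : b ∈ τ := mem_filter.2 ⟨hb, hbl⟩
  have hbD : b ∈ τ.drop (τ.idxOf a + 1) :=
    hτn.mem_drop_iff_le_idxOf.2 ⟨hbτ, (hτσ.idxOf_lt_idxOf_iff hwf.1 haτ hbτ).2 hab⟩
  obtain ⟨r, Y, hD, hrel, hth⟩ := (hwf.lockSeq l).exists_rel_of_acq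
    (eq_take_idxOf_append_cons_drop haτ) hacq (ne_nil_of_mem hbD)
  have hrτ : r ∈ τ := mem_of_mem_drop (hD ▸ mem_cons_self)
  have hrIdx : τ.idxOf r = τ.idxOf a + 1 := by
    have h0 := congrArg (·[0]?) hD
    simp only [getElem?_drop, Nat.add_zero, getElem?_cons_zero] at h0
    exact hτn.idxOf_eq_of_getElem?_eq h0
  have hbIdx := (hτn.mem_drop_iff_le_idxOf.1 hbD).2
  refine ⟨r, matchRel_eq_of_drop_proj ha hacq hrel hD, hrel, hth, ?_, ?_⟩
  · exact (hτσ.idxOf_lt_idxOf_iff hwf.1 haτ hrτ).1 (by omega)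
  · exact (hτσ.idxOf_le_idxOf_iff hwf.1 hrτ hbτ).1 (by omega)

theorem WellFormed.threadOrd_of_matchRel (hwf : WellFormed ev σ)
    (h : matchRel ev σ a = some r) : threadOrd ev σ a r := by
  obtain ⟨l, hacq, hrel, hr⟩ := matchRel_eq_some h
  obtain ⟨hrσ, hle⟩ := hwf.1.mem_drop_iff_le_idxOf.1 hr
  have haσ : a ∈ σ := idxOf_lt_length_iff.1 (by have := idxOf_lt_length_of_mem hrσ; omega)
  obtain ⟨r', hr', -, hth, hlt, -⟩ :=
    hwf.exists_matchRel hacq hrσ (onLock_iff.2 (.inr hrel)) hle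
  obtain rfl : r' = r := Option.some.inj (hr'.symm.trans h)
  exact ⟨⟨haσ, hrσ, hlt.le⟩, hth.symm⟩

theorem WellFormed.filter (hwf : WellFormed ev σ) (q : ℕ → Bool)
    (hrel : ∀ a r, matchRel ev σ a = some r → q r → q a)
    (hacq : ∀ a a' l r, (ev a).op = Op.acq l → (ev a').op = Op.acq l → a' ∈ σ →
      σ.idxOf a < σ.idxOf a' → matchRel ev σ a = some r → q a → q a' → q r) :
    WellFormed ev (σ.filter q) := by
  refine ⟨hwf.1.filter q, lockOk_of_forall_lockSeq fun l => ?_⟩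
  rw [filter_filter, filter_congr fun x _ => Bool.and_comm (onLock ev l x) (q x), ← filter_filter]
  have hτn : (σ.filter (onLock ev l)).Nodup := hwf.1.filter _
  have hmatch : ∀ X Y a r, σ.filter (onLock ev l) = X ++ a :: r :: Y → (ev a).op = Op.acq l →
      (ev r).op = Op.rel l → matchRel ev σ a = some r := fun X Y a r hs ha hr =>
    matchRel_eq_of_drop_proj (mem_of_mem_filter (by rw [hs]; simp)) ha hr
      (hτn.drop_idxOf_of_eq_append_cons hs)
  refine (hwf.lockSeq l).filter q (fun X Y a r hs ha hr => hrel a r (hmatch X Y a r hs ha hr)) ?_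
  intro X Y a r a' hs ha hr ha'Y ha' hqa hqa'
  have haτ : a ∈ σ.filter (onLock ev l) := by rw [hs]; simp
  have ha'D : a' ∈ (σ.filter (onLock ev l)).drop ((σ.filter (onLock ev l)).idxOf a + 1) := by
    rw [hτn.drop_idxOf_of_eq_append_cons hs]
    exact mem_cons_of_mem _ ha'Y
  obtain ⟨ha'τ, hle⟩ := hτn.mem_drop_iff_le_idxOf.1 ha'D
  exact hacq a a' l r ha ha' (mem_of_mem_filter ha'τ)
    ((filter_sublist.idxOf_lt_idxOf_iff hwf.1 haτ ha'τ).1 (by omega))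
    (hmatch X Y a r hs ha hr) hqa hqa'

theorem TLClosed_of_correctReordering (hcr : CorrectReordering ev σ ρ) :
    TLClosed ev σ {e | e ∈ ρ} :=
  ⟨hcr.subset, fun f g h hg => (hcr.to_closed f g h hg).1, fun e he _ hf =>
    (lw_eq_some ((hcr.lw_eq e he (lw_eq_some hf).1).trans hf)).2⟩

theorem SPClosed_of_syncPres (hwf : WellFormed ev σ) (hcr : CorrectReordering ev σ ρ)
    (hsp : SyncPres ev σ ρ) : SPClosed ev σ {e | e ∈ ρ} := by
  refine ⟨TLClosed_of_correctReordering hcr,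
    fun a₁ a₂ l ha₁ ha₂ hacq₁ hacq₂ hord hne r hr => ?_⟩
  have ha₁₂ : ρ.idxOf a₁ < ρ.idxOf a₂ :=
    ((hsp a₁ a₂ l ha₁ ha₂ hacq₁ hacq₂).2 hord).2.2.lt_of_ne (mt (idxOf_inj ha₁).1 hne)
  obtain ⟨r₁, -, hrel₁, hth₁, hlt₁, hle₁⟩ :=
    hcr.wf.exists_matchRel hacq₁ ha₂ (onLock_iff.2 (.inl hacq₂)) ha₁₂
  have hr₁ : r₁ ∈ ρ := idxOf_lt_length_iff.1 (hle₁.trans_lt (idxOf_lt_length_of_mem ha₂))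
  have hr₁σ : r₁ ∈ σ := hcr.subset r₁ hr₁
  -- `r₁` follows `a₁` in `σ` too, since reorderings preserve thread order
  have hσ₁ : σ.idxOf a₁ < σ.idxOf r₁ := by
    by_contra! hle
    have := (hcr.to_closed r₁ a₁ ⟨⟨hr₁σ, hord.1, hle⟩, hth₁⟩ ha₁).2.1.2.2
    omega
  obtain ⟨r₀, hr₀, -, hth₀, -, hle₀⟩ :=
    hwf.exists_matchRel hacq₁ hr₁σ (onLock_iff.2 (.inr hrel₁)) hσ₁
  obtain rfl : r = r₀ := Option.some.inj (hr.symm.trans hr₀)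
  have hrσ : r ∈ σ := idxOf_lt_length_iff.1 (hle₀.trans_lt (idxOf_lt_length_of_mem hr₁σ))
  exact (hcr.to_closed r r₁ ⟨⟨hrσ, hr₁σ, hle₀⟩, hth₀.trans hth₁.symm⟩ hr₁).1

theorem trord_filter_iff (hn : σ.Nodup) {q : ℕ → Bool} (ha : a ∈ σ.filter q)
    (hb : b ∈ σ.filter q) : trord (σ.filter q) a b ↔ trord σ a b := by
  simp only [trord, ha, hb, mem_of_mem_filter ha, mem_of_mem_filter hb, true_and]
  exact filter_sublist.idxOf_le_idxOf_iff hn ha hb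

theorem syncPres_filter (hn : σ.Nodup) (q : ℕ → Bool) : SyncPres ev σ (σ.filter q) :=
  fun _ _ _ ha hb _ _ => trord_filter_iff hn ha hb

theorem lw_filter {q : ℕ → Bool} (he : e ∈ σ) (hqe : q e)
    (hlw : ∀ w, lw ev σ e = some w → q w) : lw ev (σ.filter q) e = lw ev σ e := by
  unfold lw at hlw ⊢
  split at hlw
  · rw [take_idxOf_filter he hqe]
    exact getLast?_filter_filter hlw
  · rfl

theorem correctReordering_filter (hwf : WellFormed ev σ) [DecidablePred (· ∈ I)]
    (hI : SPClosed ev σ I) : CorrectReordering ev σ (σ.filter (· ∈ I)) where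
  wf := hwf.filter _
    (fun a r hm hr => by
      simpa using hI.1.2.1 a r (hwf.threadOrd_of_matchRel hm) (by simpa using hr))
    (fun a a' l r ha ha' ha'σ hlt hm hqa hqa' => by
      simpa using hI.2 a a' l (by simpa using hqa) (by simpa using hqa') ha ha'
        ⟨(hwf.threadOrd_of_matchRel hm).1.1, ha'σ, hlt.le⟩ (by rintro rfl; omega) r hm)
  subset _ he := mem_of_mem_filter he
  to_closed f g h hg := by
    have hf : f ∈ σ.filter (· ∈ I) :=
      mem_filter.2 ⟨h.1.1, by simpa using hI.1.2.1 f g h (by simpa using (mem_filter.1 hg).2)⟩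
    exact ⟨hf, (trord_filter_iff hwf.1 hf hg).2 h.1, h.2⟩
  lw_eq e he _ := by
    have heI : e ∈ I := by simpa using (mem_filter.1 he).2
    exact lw_filter (mem_of_mem_filter he) (by simpa using heI)
      fun w hw => by simpa using hI.1.2.2 e heI w hw

theorem enabled_filter (hn : σ.Nodup) [DecidablePred (· ∈ I)] (hI : TLClosed ev σ I)
    (he : e ∈ σ) (heI : e ∉ I) (hprev : ∀ p, prevE ev σ e = some p → p ∈ I) :
    Enabled ev σ (σ.filter (· ∈ I)) e := by
  refine ⟨he, by simpa using fun _ => heI, fun f hfe hne => ?_⟩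
  obtain ⟨p, hp, hfp⟩ := exists_prevE_of_threadOrd hn hfe hne
  exact mem_filter.2 ⟨hfe.1.1, by simpa using hI.2.1 f p hfp (hprev p hp)⟩

end Race

open Race in
theorem syncpres_race_iff_spideal_general (ev : ℕ → EventData) (σ : Trace)
    (hwf : WellFormed ev σ) (e1 e2 : ℕ) (h1 : e1 ∈ σ) (h2 : e2 ∈ σ)
    (hc : Conflicting ev e1 e2) :
    SyncPresRace ev σ e1 e2 ↔
      (e1 ∉ SPIdeal ev σ e1 e2 ∧ e2 ∉ SPIdeal ev σ e1 e2) := by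
  constructor
  · rintro ⟨-, -, -, ρ, hcr, hsp, hen1, hen2⟩
    have hsub : SPIdeal ev σ e1 e2 ⊆ {e | e ∈ ρ} :=
      SPClosure_subset (SPClosed_of_syncPres hwf hcr hsp)
        (by rintro p (hp | hp); exacts [hen1.prevE_mem hp, hen2.prevE_mem hp])
    exact ⟨fun h => hen1.2.1 (hsub h), fun h => hen2.2.1 (hsub h)⟩
  · rintro ⟨hn1, hn2⟩
    classical
    have hI : SPClosed ev σ (SPIdeal ev σ e1 e2) := SPClosed_SPClosure <| by
      rintro p (hp | hp)
      exacts [(prevE_eq_some h1 hp).1.1.1, (prevE_eq_some h2 hp).1.1.1]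
    exact ⟨h1, h2, hc, _, correctReordering_filter hwf hI, syncPres_filter hwf.1 _,
      enabled_filter hwf.1 hI.1 h1 hn1 fun p hp => subset_SPClosure (Or.inl hp),
      enabled_filter hwf.1 hI.1 h2 hn2 fun p hp => subset_SPClosure (Or.inr hp)⟩

open Race in
/-- a conflicting pair `(e1, e2)` of a well-formed trace `σ`
(with `e1` strictly before `e2`) is a sync-preserving race iff
`SPIdeal σ (e1, e2)` contains neither `e1` nor `e2`. -/
theorem syncpres_race_iff_spideal (ev : ℕ → EventData) (σ : Trace)
    (hwf : WellFormed ev σ) (e1 e2 : ℕ) (h1 : e1 ∈ σ) (h2 : e2 ∈ σ)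
    (hc : Conflicting ev e1 e2) (hord : trord σ e1 e2) (hne : e1 ≠ e2) :
    SyncPresRace ev σ e1 e2 ↔
      (e1 ∉ SPIdeal ev σ e1 e2 ∧ e2 ∉ SPIdeal ev σ e1 e2) :=
  syncpres_race_iff_spideal_general ev σ hwf e1 e2 h1 h2 hc
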